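/- arXiv:1712.01031 — 3 statements merged into one kernel-verified Lean document; each statement's English description precedes it below -/
import Mathlib

section
/- Let α > 0, β ∈ ℝ, K ∈ ℝ, f ∈ ℝ, and suppose 2v₀* + K > 0. Then the supremum over u ∈ ℝ of u·v₁* + v·v₀* − (α/2)(u² − β + v)² − (1/2)K u² + u·f, taken jointly over u, v ∈ ℝ, equals (1/2)(v₁* + f)²/(2v₀* + K) + (1/(2α))(v₀*)² + β v₀*. -/
/-!
Substituting `w = u² − β + v` decouples the two variables: the objective becomes
`w v₀ − (α/2) w² + β v₀` plus the concave quadratic `u (v₁ + f) − (1/2)(2v₀ + K) u²` in `u`.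
Completing both squares, the claimed value minus the objective is a nonnegative combination of
`(α w − v₀)²` and `((2v₀ + K) u − (v₁ + f))²`, and both vanish at
`u = (v₁ + f)/(2v₀ + K)`, `w = v₀/α`.
-/

namespace DoubleWell

variable (α β K f v₀ v₁ : ℝ)

noncomputable def dualObjective (u v : ℝ) : ℝ :=
  u*v₁ + v*v₀ - (α/2)*(u^2 - β + v)^2 - (1/2)*K*u^2 + u*f

noncomputable def dualValue : ℝ :=
  (1/2)*(v₁ + f)^2/(2*v₀ + K) + (1/(2*α))*v₀^2 + β*v₀

variable {α K v₀}

theorem dualValue_sub_dualObjective (hα : α ≠ 0) (h : 2*v₀ + K ≠ 0) (u v : ℝ) :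
    dualValue α β K f v₀ v₁ - dualObjective α β K f v₀ v₁ u v
      = ((α*(u^2 - β + v) - v₀)^2 * (2*v₀ + K) + α*((2*v₀ + K)*u - (v₁ + f))^2)
          / (2*α*(2*v₀ + K)) := by
  unfold dualValue dualObjective
  field_simp
  ring

theorem dualObjective_le_dualValue (hα : 0 < α) (h : 0 < 2*v₀ + K) (u v : ℝ) :
    dualObjective α β K f v₀ v₁ u v ≤ dualValue α β K f v₀ v₁ := by
  rw [← sub_nonneg, dualValue_sub_dualObjective β f v₁ hα.ne' h.ne']
  positivity

theorem dualObjective_eq_dualValue (hα : α ≠ 0) (h : 2*v₀ + K ≠ 0) :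
    dualObjective α β K f v₀ v₁ ((v₁ + f)/(2*v₀ + K)) (v₀/α - ((v₁ + f)/(2*v₀ + K))^2 + β)
      = dualValue α β K f v₀ v₁ := by
  unfold dualValue dualObjective
  field_simp
  ring

theorem isGreatest_dualValue (hα : 0 < α) (h : 0 < 2*v₀ + K) :
    IsGreatest {y | ∃ u v, y = dualObjective α β K f v₀ v₁ u v} (dualValue α β K f v₀ v₁) :=
  ⟨⟨_, _, (dualObjective_eq_dualValue β f v₁ hα.ne' h.ne').symm⟩,
    by rintro y ⟨u, v, rfl⟩; exact dualObjective_le_dualValue β f v₁ hα h u v⟩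

end DoubleWell

/-- Partial Legendre transform of the perturbed double-well
`G(u,v) = (α/2)(u² − β + v)² + (1/2)Ku² − uf`, under `2v₀ + K > 0`. -/
theorem stmt2 (α β K f v₀ v₁ : ℝ) (hα : 0 < α) (h : 0 < 2*v₀ + K) :
    IsLUB {y : ℝ | ∃ u v : ℝ,
        y = u*v₁ + v*v₀ - (α/2)*(u^2 - β + v)^2 - (1/2)*K*u^2 + u*f}
      ((1/2)*(v₁ + f)^2/(2*v₀ + K) + (1/(2*α))*v₀^2 + β*v₀) :=
  (DoubleWell.isGreatest_dualValue β f v₁ hα h).isLUB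
end

section
/- Let α > 0, β ∈ ℝ, u₀ ∈ ℝ, and set v₀* = α(u₀² − β) and K = −2v₀* + ε with ε > 0. Then for all u ∈ ℝ, (α/2)(u² − β)² + (1/2)(−2α(u₀² − β) + ε)(u − u₀)² ≥ (α/2)(u₀² − β)² + 2α(u₀² − β)u₀ (u − u₀). -/
/-- One-dimensional convexification lemma: with `K = −2α(u₀² − β) + ε`, the `K`-perturbed
double well lies above its tangent line at `u₀`. -/
theorem stmt6 (α β ε u₀ : ℝ) (hα : 0 < α) (hε : 0 < ε) :
    ∀ u : ℝ,
      (α/2) * (u₀^2 - β)^2 + 2*α*(u₀^2 - β)*u₀*(u - u₀)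
        ≤ (α/2) * (u^2 - β)^2 + (1/2) * (-2*α*(u₀^2 - β) + ε) * (u - u₀)^2 := by
  intro u
  nlinarith [mul_nonneg hα.le (sq_nonneg (u^2 - u₀^2)), mul_nonneg hε.le (sq_nonneg (u - u₀))]
end

section
/- Let α > 0, β ∈ ℝ, γ > 0, A symmetric positive semidefinite n×n, f ∈ ℝⁿ, ε > 0. Define J₃*(v₀*, û) = −(γ/2)⟨Aû, û⟩ − (1/2)∑ᵢ(2v₀*ᵢ − ε)ûᵢ² − (1/(2ε))∑ᵢ(−γ(Aû)ᵢ + (−2v₀*ᵢ + ε)ûᵢ + fᵢ)² − (1/(2α))∑ᵢ(v₀*ᵢ)² − β∑ᵢ v₀*ᵢ. Suppose u₀ satisfies −γ(Au₀)ᵢ − 2α(u₀ᵢ² − β)u₀ᵢ + fᵢ = 0 for all i, and set ṽ₀*ᵢ = α(u₀ᵢ² − β). Then (ṽ₀*, u₀) is a critical point of J₃*: both partial gradients of J₃* vanish at (ṽ₀*, u₀). -/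
open Matrix

section
variable (n : ℕ) (A : Matrix (Fin n) (Fin n) ℝ)

noncomputable def Vm (i : Fin n) : ((Fin n → ℝ) × (Fin n → ℝ)) →L[ℝ] ℝ :=
  (ContinuousLinearMap.proj i).comp (ContinuousLinearMap.fst ℝ _ _)
noncomputable def Um (i : Fin n) : ((Fin n → ℝ) × (Fin n → ℝ)) →L[ℝ] ℝ :=
  (ContinuousLinearMap.proj i).comp (ContinuousLinearMap.snd ℝ _ _)
noncomputable def Wm (i : Fin n) : ((Fin n → ℝ) × (Fin n → ℝ)) →L[ℝ] ℝ :=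
  ∑ j, A i j • Um n j

@[simp] lemma Vm_apply (i : Fin n) (p) : Vm n i p = p.1 i := rfl
@[simp] lemma Um_apply (i : Fin n) (p) : Um n i p = p.2 i := rfl
@[simp] lemma Wm_apply (i : Fin n) (p) : Wm n A i p = A.mulVec p.2 i := by
  simp [Wm, Matrix.mulVec, dotProduct, Um]

end

/-- Discretized primal–dual functional `J₃*`: if `u₀` solves the discrete Euler–Lagrange
equation and `ṽ₀*ᵢ = α(u₀ᵢ² − β)`, then `(ṽ₀*, u₀)` is a critical point of `J₃*`. -/
theorem stmt18 (n : ℕ) (α β γ ε : ℝ) (hα : 0 < α) (hγ : 0 < γ) (hε : 0 < ε)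
    (A : Matrix (Fin n) (Fin n) ℝ) (hA : A.PosSemidef)
    (f : Fin n → ℝ)
    (J₃ : (Fin n → ℝ) × (Fin n → ℝ) → ℝ)
    (hJ₃ : ∀ p : (Fin n → ℝ) × (Fin n → ℝ),
      J₃ p = -(γ/2) * (A.mulVec p.2 ⬝ᵥ p.2)
        - (1/2) * ∑ i, (2 * p.1 i - ε) * (p.2 i)^2
        - (1/(2*ε)) * ∑ i, (-γ * A.mulVec p.2 i + (-2 * p.1 i + ε) * p.2 i + f i)^2
        - (1/(2*α)) * ∑ i, (p.1 i)^2 - β * ∑ i, p.1 i)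
    (u₀ : Fin n → ℝ)
    (hEL : ∀ i, -γ * A.mulVec u₀ i - 2*α*(u₀ i^2 - β)*u₀ i + f i = 0)
    (v₀ : Fin n → ℝ) (hv₀ : ∀ i, v₀ i = α*(u₀ i^2 - β)) :
    HasFDerivAt J₃ (0 : ((Fin n → ℝ) × (Fin n → ℝ)) →L[ℝ] ℝ) (v₀, u₀) := by
  have hfun : J₃ = fun p : (Fin n → ℝ) × (Fin n → ℝ) => ∑ i,
      (-(γ/2) * (A.mulVec p.2 i * p.2 i)
        - (1/2) * ((2 * p.1 i - ε) * (p.2 i * p.2 i))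
        - (1/(2*ε)) * ((-γ * A.mulVec p.2 i + (-2 * p.1 i + ε) * p.2 i + f i) * (-γ * A.mulVec p.2 i + (-2 * p.1 i + ε) * p.2 i + f i))
        - (1/(2*α)) * (p.1 i * p.1 i) - β * p.1 i) := by
    funext p
    rw [hJ₃ p]
    simp only [dotProduct, Finset.mul_sum, ← Finset.sum_sub_distrib]
    exact Finset.sum_congr rfl fun i _ => by ring
  rw [hfun]
  set pt : (Fin n → ℝ) × (Fin n → ℝ) := (v₀, u₀) with hpt
  have hV : ∀ i, HasFDerivAt (fun p : (Fin n → ℝ) × (Fin n → ℝ) => p.1 i) (Vm n i) pt :=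
    fun i => (Vm n i).hasFDerivAt
  have hU : ∀ i, HasFDerivAt (fun p : (Fin n → ℝ) × (Fin n → ℝ) => p.2 i) (Um n i) pt :=
    fun i => (Um n i).hasFDerivAt
  have hW : ∀ i, HasFDerivAt (fun p : (Fin n → ℝ) × (Fin n → ℝ) => A.mulVec p.2 i) (Wm n A i) pt := by
    intro i
    have : (fun p : (Fin n → ℝ) × (Fin n → ℝ) => A.mulVec p.2 i) = fun p => Wm n A i p := by
      funext p; simp
    rw [this]; exact (Wm n A i).hasFDerivAt
  have hsum := HasFDerivAt.fun_sum (u := Finset.univ) (fun i (_ : i ∈ Finset.univ) =>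
    ((((((hW i).mul (hU i)).const_mul (-(γ/2))).sub
      (((((hV i).const_mul 2).sub_const ε).mul ((hU i).mul (hU i))).const_mul (1/2))).sub
      ((((((hW i).const_mul (-γ)).add ((((hV i).const_mul (-2)).add_const ε).mul (hU i))).add_const (f i)).mul ((((hW i).const_mul (-γ)).add ((((hV i).const_mul (-2)).add_const ε).mul (hU i))).add_const (f i))).const_mul (1/(2*ε)))).sub
      ((((hV i).mul (hV i)).const_mul (1/(2*α))))).sub ((hV i).const_mul β))
  refine hsum.congr_fderiv ?_
  refine ContinuousLinearMap.ext fun x => ?_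
  rw [ContinuousLinearMap.sum_apply]
  simp only [ContinuousLinearMap.sub_apply, ContinuousLinearMap.add_apply,
    ContinuousLinearMap.smul_apply, Vm_apply, Um_apply, Wm_apply,
    ContinuousLinearMap.zero_apply, smul_eq_mul, hpt, Pi.mul_apply, Pi.add_apply]
  have hsym : ∀ i j, A i j = A j i := fun i j => by
    conv_rhs => rw [← hA.1]
    simp [Matrix.conjTranspose_apply]
  have key : ∀ i : Fin n,
      (-(γ / 2) * (A.mulVec u₀ i * x.2 i + u₀ i * A.mulVec x.2 i) -
              1 / 2 * ((2 * v₀ i - ε) * (u₀ i * x.2 i + u₀ i * x.2 i) + u₀ i * u₀ i * (2 * x.1 i)) -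
            1 / (2 * ε) *
              ((-γ * A.mulVec u₀ i + (-2 * v₀ i + ε) * u₀ i + f i) *
                  (-γ * A.mulVec x.2 i + ((-2 * v₀ i + ε) * x.2 i + u₀ i * (-2 * x.1 i))) +
                (-γ * A.mulVec u₀ i + (-2 * v₀ i + ε) * u₀ i + f i) *
                  (-γ * A.mulVec x.2 i + ((-2 * v₀ i + ε) * x.2 i + u₀ i * (-2 * x.1 i)))) -
          1 / (2 * α) * (v₀ i * x.1 i + v₀ i * x.1 i) -
        β * x.1 i) =
      γ / 2 * (u₀ i * A.mulVec x.2 i) - γ / 2 * (A.mulVec u₀ i * x.2 i) := by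
    intro i
    have h1 : -γ * A.mulVec u₀ i + (-2 * v₀ i + ε) * u₀ i + f i = ε * u₀ i := by
      rw [hv₀ i]; linarith [hEL i]
    rw [h1, hv₀ i]
    field_simp
    ring
  rw [Finset.sum_congr rfl fun i _ => key i, Finset.sum_sub_distrib, sub_eq_zero]
  simp only [Matrix.mulVec, dotProduct, Finset.mul_sum, Finset.sum_mul]
  rw [Finset.sum_comm]
  refine Finset.sum_congr rfl fun i _ => Finset.sum_congr rfl fun j _ => ?_
  rw [hsym i j]; ring
end
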